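/- arXiv:2507.12283 — 4 statements merged into one kernel-verified Lean document; each statement's English description precedes it below -/
import Mathlib

section
/- For all positive real numbers a, b and all t ∈ (0,1), a·log t + b·log(1−t) ≤ a·log(a/(a+b)) + b·log(b/(a+b)). -/
/-! Compare `log t` with `log p` and `log (1 - t)` with `log (1 - p)`, where `p = a / (a + b)`,
through `log u ≤ u - 1`. The resulting linear bounds `(a + b) t - a` and `(a + b) (1 - t) - b`
add up to zero. -/

open Real

theorem mul_log_sub_log_le {w x y : ℝ} (hw : 0 ≤ w) (hx : 0 < x) (hy : 0 < y) :
    w * (log x - log y) ≤ w * (x / y) - w :=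
  calc w * (log x - log y) = w * log (x / y) := by rw [log_div hx.ne' hy.ne']
    _ ≤ w * (x / y - 1) := mul_le_mul_of_nonneg_left (log_le_sub_one_of_pos (div_pos hx hy)) hw
    _ = w * (x / y) - w := by ring

/-- For all positive reals `a, b` and all `t ∈ (0,1)`,
`a * log t + b * log (1 - t) ≤ a * log (a/(a+b)) + b * log (b/(a+b))`. -/
theorem fade_stmt1 (a b : ℝ) (ha : 0 < a) (hb : 0 < b) (t : ℝ) (ht : t ∈ Set.Ioo (0 : ℝ) 1) :
    a * Real.log t + b * Real.log (1 - t) ≤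
      a * Real.log (a / (a + b)) + b * Real.log (b / (a + b)) := by
  obtain ⟨ht0, ht1⟩ := ht
  have hab : 0 < a + b := add_pos ha hb
  have hA := mul_log_sub_log_le ha.le ht0 (div_pos ha hab)
  have hB := mul_log_sub_log_le hb.le (sub_pos.2 ht1) (div_pos hb hab)
  have eA : a * (t / (a / (a + b))) = t * (a + b) := by field_simp
  have eB : b * ((1 - t) / (b / (a + b))) = (1 - t) * (a + b) := by field_simp
  linarith
end

section
/- Let (X, 𝒜) be a measurable space, λ a σ-finite measure on X, and let p, q : X → ℝ≥0 be measurable densities with ∫ p dλ = ∫ q dλ = 1. Let π ∈ (0,1) and define D*(x) = π·p(x) / (π·p(x) + (1−π)·q(x)) on the set where π·p(x) + (1−π)·q(x) > 0 (and D*(x) = π elsewhere). Then for every measurable function D : X → (0,1), we have π·∫ p(x)·log D(x) dλ(x) + (1−π)·∫ q(x)·log(1−D(x)) dλ(x) ≤ π·∫ p(x)·log D*(x) dλ(x) + (1−π)·∫ q(x)·log(1−D*(x)) dλ(x), where the integrals are interpreted in the extended reals. -/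
/-!
For each `x`, the integrand `π p log D + (1 - π) q log (1 - D)` is maximised over `D ∈ (0,1)`
at `D = D*(x)`: with `a = π p`, `b = (1 - π) q` and `s = a + b`, the inequality
`a log D ≤ a log (a / s) + (D s - a)` (which is `log y ≤ y - 1`) and its analogue for `1 - D`
add up to `a log D + b log (1 - D) ≤ a log (a / s) + b log (b / s)`, the correction terms
cancelling. All four integrands are nonpositive, so each extended integral is minus a lower
Lebesgue integral, and the pointwise inequality integrates.
-/

open MeasureTheory
open scoped ENNReal NNReal

/-- The extended-real-valued integral of a real function: the Lebesgue integral of the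
positive part minus that of the negative part, valued in `EReal`. -/
noncomputable def erealIntegral {X : Type*} [MeasurableSpace X] (lam : Measure X)
    (f : X → ℝ) : EReal :=
  ((∫⁻ x, ENNReal.ofReal (f x) ∂lam : ℝ≥0∞) : EReal)
    - ((∫⁻ x, ENNReal.ofReal (-(f x)) ∂lam : ℝ≥0∞) : EReal)

namespace Real

theorem mul_log_nonpos_of_mem_Icc {a x : ℝ} (ha : 0 ≤ a) (hx : x ∈ Set.Icc (0 : ℝ) 1) :
    a * log x ≤ 0 :=
  mul_nonpos_of_nonneg_of_nonpos ha (log_nonpos hx.1 hx.2)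

theorem mul_log_le_mul_log_div_add {a s x : ℝ} (ha : 0 ≤ a) (hs : 0 < s) (hx : 0 < x) :
    a * log x ≤ a * log (a / s) + (x * s - a) := by
  rcases ha.eq_or_lt with rfl | ha
  · simp only [zero_mul, zero_div, log_zero, mul_zero, sub_zero, zero_add]
    positivity
  have hlog : log x - log (a / s) ≤ x * s / a - 1 := by
    rw [← log_div hx.ne' (by positivity), div_div_eq_mul_div]
    exact log_le_sub_one_of_pos (by positivity)
  have hmul := mul_le_mul_of_nonneg_left hlog ha.le
  rw [mul_sub, mul_sub, mul_div_cancel₀ _ ha.ne', mul_one] at hmul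
  linarith

theorem mul_log_add_mul_log_one_sub_le {a b d : ℝ} (ha : 0 ≤ a) (hb : 0 ≤ b) (hab : 0 < a + b)
    (hd : d ∈ Set.Ioo (0 : ℝ) 1) :
    a * log d + b * log (1 - d)
      ≤ a * log (a / (a + b)) + b * log (1 - a / (a + b)) := by
  have hb_div : 1 - a / (a + b) = b / (a + b) := by field_simp; ring
  have h₁ := mul_log_le_mul_log_div_add ha hab hd.1
  have h₂ := mul_log_le_mul_log_div_add hb hab (sub_pos.2 hd.2)
  rw [hb_div]
  linarith

end Real

section erealIntegral

variable {X : Type*} [MeasurableSpace X] {lam : Measure X}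

theorem erealIntegral_of_nonpos {f : X → ℝ} (hf : ∀ x, f x ≤ 0) :
    erealIntegral lam f = -((∫⁻ x, ENNReal.ofReal (-f x) ∂lam : ℝ≥0∞) : EReal) := by
  have hpos : ∫⁻ x, ENNReal.ofReal (f x) ∂lam = 0 := by
    simp [ENNReal.ofReal_eq_zero.2 (hf _)]
  rw [erealIntegral, hpos, EReal.coe_ennreal_zero, zero_sub]

theorem EReal.coe_mul_neg_coe_ennreal {c : ℝ} (hc : 0 ≤ c) (L : ℝ≥0∞) :
    (c : EReal) * -(L : EReal) = -((ENNReal.ofReal c * L : ℝ≥0∞) : EReal) := by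
  rw [EReal.coe_ennreal_mul, EReal.coe_ennreal_ofReal, max_eq_left hc, mul_neg]

theorem EReal.neg_coe_ennreal_add_neg_coe_ennreal (A B : ℝ≥0∞) :
    -(A : EReal) + -(B : EReal) = -((A + B : ℝ≥0∞) : EReal) := by
  rw [EReal.coe_ennreal_add, EReal.neg_add (Or.inl (by simp)) (Or.inr (by simp)), sub_eq_add_neg]

theorem erealIntegral_smul_add_smul_of_nonpos {c d : ℝ} (hc : 0 ≤ c) (hd : 0 ≤ d)
    {f g : X → ℝ} (hf : ∀ x, f x ≤ 0) (hg : ∀ x, g x ≤ 0) :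
    (c : EReal) * erealIntegral lam f + (d : EReal) * erealIntegral lam g
      = -((ENNReal.ofReal c * ∫⁻ x, ENNReal.ofReal (-f x) ∂lam
          + ENNReal.ofReal d * ∫⁻ x, ENNReal.ofReal (-g x) ∂lam : ℝ≥0∞) : EReal) := by
  rw [erealIntegral_of_nonpos hf, erealIntegral_of_nonpos hg,
    EReal.coe_mul_neg_coe_ennreal hc, EReal.coe_mul_neg_coe_ennreal hd,
    EReal.neg_coe_ennreal_add_neg_coe_ennreal]

theorem erealIntegral_smul_add_smul_mono {c d : ℝ} (hc : 0 ≤ c) (hd : 0 ≤ d)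
    {f g f' g' : X → ℝ} (hfm : Measurable f) (hf : ∀ x, f x ≤ 0) (hg : ∀ x, g x ≤ 0)
    (hf' : ∀ x, f' x ≤ 0) (hg' : ∀ x, g' x ≤ 0)
    (hle : ∀ x, c * f x + d * g x ≤ c * f' x + d * g' x) :
    (c : EReal) * erealIntegral lam f + (d : EReal) * erealIntegral lam g
      ≤ (c : EReal) * erealIntegral lam f' + (d : EReal) * erealIntegral lam g' := by
  rw [erealIntegral_smul_add_smul_of_nonpos hc hd hf hg,
    erealIntegral_smul_add_smul_of_nonpos hc hd hf' hg', EReal.neg_le_neg_iff,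
    EReal.coe_ennreal_le_coe_ennreal_iff]
  have hpointwise : ∀ x,
      ENNReal.ofReal c * ENNReal.ofReal (-f' x) + ENNReal.ofReal d * ENNReal.ofReal (-g' x)
        ≤ ENNReal.ofReal c * ENNReal.ofReal (-f x)
          + ENNReal.ofReal d * ENNReal.ofReal (-g x) := by
    intro x
    have hf'x := mul_nonneg hc (neg_nonneg.2 (hf' x))
    have hg'x := mul_nonneg hd (neg_nonneg.2 (hg' x))
    rw [← ENNReal.ofReal_mul hc, ← ENNReal.ofReal_mul hd, ← ENNReal.ofReal_mul hc,
      ← ENNReal.ofReal_mul hd, ← ENNReal.ofReal_add hf'x hg'x,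
      ← ENNReal.ofReal_add (mul_nonneg hc (neg_nonneg.2 (hf x)))
        (mul_nonneg hd (neg_nonneg.2 (hg x)))]
    exact ENNReal.ofReal_le_ofReal (by linarith [hle x])
  calc ENNReal.ofReal c * ∫⁻ x, ENNReal.ofReal (-f' x) ∂lam
        + ENNReal.ofReal d * ∫⁻ x, ENNReal.ofReal (-g' x) ∂lam
      ≤ ∫⁻ x, (ENNReal.ofReal c * ENNReal.ofReal (-f' x)
          + ENNReal.ofReal d * ENNReal.ofReal (-g' x)) ∂lam := by
        rw [← lintegral_const_mul' _ _ ENNReal.ofReal_ne_top,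
          ← lintegral_const_mul' _ _ ENNReal.ofReal_ne_top]
        exact le_lintegral_add _ _
    _ ≤ ∫⁻ x, (ENNReal.ofReal c * ENNReal.ofReal (-f x)
          + ENNReal.ofReal d * ENNReal.ofReal (-g x)) ∂lam := lintegral_mono hpointwise
    _ = ENNReal.ofReal c * ∫⁻ x, ENNReal.ofReal (-f x) ∂lam
        + ENNReal.ofReal d * ∫⁻ x, ENNReal.ofReal (-g x) ∂lam := by
        rw [lintegral_add_left' (by fun_prop), lintegral_const_mul' _ _ ENNReal.ofReal_ne_top,
          lintegral_const_mul' _ _ ENNReal.ofReal_ne_top]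

end erealIntegral

theorem fade_stmt2_general {X : Type*} [MeasurableSpace X] (lam : Measure X)
    (p q : X → ℝ≥0) (hp : Measurable p)
    (π : ℝ) (hπ : π ∈ Set.Ioo (0 : ℝ) 1)
    (Dstar : X → ℝ)
    (hDstar : ∀ x, Dstar x =
      if 0 < π * (p x : ℝ) + (1 - π) * (q x : ℝ) then
        π * (p x : ℝ) / (π * (p x : ℝ) + (1 - π) * (q x : ℝ))
      else π)
    (D : X → ℝ) (hD : Measurable D) (hD01 : ∀ x, D x ∈ Set.Ioo (0 : ℝ) 1) :
    (π : EReal) * erealIntegral lam (fun x => (p x : ℝ) * Real.log (D x))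
      + ((1 - π : ℝ) : EReal) * erealIntegral lam (fun x => (q x : ℝ) * Real.log (1 - D x))
    ≤ (π : EReal) * erealIntegral lam (fun x => (p x : ℝ) * Real.log (Dstar x))
      + ((1 - π : ℝ) : EReal)
          * erealIntegral lam (fun x => (q x : ℝ) * Real.log (1 - Dstar x)) := by
  obtain ⟨hπ0, hπ1⟩ := hπ
  have h1π : 0 < 1 - π := sub_pos.2 hπ1
  have hDstar_mem : ∀ x, Dstar x ∈ Set.Icc (0 : ℝ) 1 := by
    intro x
    rw [hDstar x]
    split_ifs with hpos
    · exact ⟨by positivity,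
        div_le_one_of_le₀ (le_add_of_nonneg_right (by positivity)) hpos.le⟩
    · exact ⟨hπ0.le, hπ1.le⟩
  have hD_mem : ∀ x, D x ∈ Set.Icc (0 : ℝ) 1 := fun x => Set.Ioo_subset_Icc_self (hD01 x)
  refine erealIntegral_smul_add_smul_mono hπ0.le h1π.le (by fun_prop)
    (fun x => Real.mul_log_nonpos_of_mem_Icc (p x).2 (hD_mem x))
    (fun x => Real.mul_log_nonpos_of_mem_Icc (q x).2 (Set.Icc.one_sub_mem (hD_mem x)))
    (fun x => Real.mul_log_nonpos_of_mem_Icc (p x).2 (hDstar_mem x))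
    (fun x => Real.mul_log_nonpos_of_mem_Icc (q x).2 (Set.Icc.one_sub_mem (hDstar_mem x)))
    fun x => ?_
  simp only [← mul_assoc]
  rw [hDstar x]
  split_ifs with hpos
  · exact Real.mul_log_add_mul_log_one_sub_le (by positivity) (by positivity) hpos (hD01 x)
  · have hpx : π * (p x : ℝ) = 0 := by nlinarith [(p x).2, (q x).2]
    have hqx : (1 - π) * (q x : ℝ) = 0 := by nlinarith [(p x).2, (q x).2]
    simp [hpx, hqx]

/-- Optimality of the Bayes (likelihood-ratio) discriminator
`D*(x) = π p(x) / (π p(x) + (1-π) q(x))` (set to `π` where the denominator vanishes):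
for every measurable `D : X → (0,1)`, the weighted cross-entropy objective
`π ∫ p log D dλ + (1-π) ∫ q log(1-D) dλ` (in the extended reals) is at most
its value at `D*`. -/
theorem fade_stmt2 {X : Type*} [MeasurableSpace X] (lam : Measure X) [SigmaFinite lam]
    (p q : X → ℝ≥0) (hp : Measurable p) (hq : Measurable q)
    (hp1 : ∫⁻ x, (p x : ℝ≥0∞) ∂lam = 1) (hq1 : ∫⁻ x, (q x : ℝ≥0∞) ∂lam = 1)
    (π : ℝ) (hπ : π ∈ Set.Ioo (0 : ℝ) 1)
    (Dstar : X → ℝ)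
    (hDstar : ∀ x, Dstar x =
      if 0 < π * (p x : ℝ) + (1 - π) * (q x : ℝ) then
        π * (p x : ℝ) / (π * (p x : ℝ) + (1 - π) * (q x : ℝ))
      else π)
    (D : X → ℝ) (hD : Measurable D) (hD01 : ∀ x, D x ∈ Set.Ioo (0 : ℝ) 1) :
    (π : EReal) * erealIntegral lam (fun x => (p x : ℝ) * Real.log (D x))
      + ((1 - π : ℝ) : EReal) * erealIntegral lam (fun x => (q x : ℝ) * Real.log (1 - D x))
    ≤ (π : EReal) * erealIntegral lam (fun x => (p x : ℝ) * Real.log (Dstar x))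
      + ((1 - π : ℝ) : EReal)
          * erealIntegral lam (fun x => (q x : ℝ) * Real.log (1 - Dstar x)) :=
  fade_stmt2_general lam p q hp π hπ Dstar hDstar D hD hD01
end

section
/- Let μ and ν be probability measures on a measurable space (X, 𝒜) with μ ≠ ν. Then there exists a measurable function D : X → (0,1) such that ∫ log(D(x)) dμ(x) + ∫ log(1 − D(x)) dν(x) > −2·log 2, with both integrals finite. -/
/-!
If `μ ≠ ν`, some measurable set `A` has `ν A < μ A`. Perturb the constant discriminator `1/2`
to `(1 + t)/2` on `A`: the objective becomes `μ(A) log(1 + t) + ν(A) log(1 - t) - 2 log 2`, whose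
derivative in `t` at `0` is `μ(A) - ν(A) > 0`, so a small `t > 0` beats random guessing.
-/

open MeasureTheory Real

lemma exists_measurableSet_measureReal_lt_of_ne {X : Type*} [MeasurableSpace X]
    {μ ν : Measure X} [IsProbabilityMeasure μ] [IsProbabilityMeasure ν] (h : μ ≠ ν) :
    ∃ A, MeasurableSet A ∧ ν.real A < μ.real A := by
  by_contra! hle
  refine h (Measure.ext fun s hs => ?_)
  have hcompl := hle sᶜ hs.compl
  rw [probReal_compl_eq_one_sub hs, probReal_compl_eq_one_sub hs] at hcompl
  rw [← ENNReal.toReal_eq_toReal_iff' (measure_ne_top _ _) (measure_ne_top _ _)]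
  change μ.real s = ν.real s
  exact le_antisymm (hle s hs) (by linarith)

lemma mul_log_one_add_add_mul_log_one_sub_pos {a b t : ℝ} (hb : 0 ≤ b) (ht₀ : 0 < t)
    (ht₁ : t < 1) (h : b * (1 + t) < a * (1 - t)) :
    0 < a * log (1 + t) + b * log (1 - t) := by
  have ha : 0 ≤ a := by nlinarith
  have hplus : t / (1 + t) ≤ log (1 + t) := by
    convert one_sub_inv_le_log_of_pos (show 0 < 1 + t by linarith) using 1
    field_simp
    ring
  have hminus : -t / (1 - t) ≤ log (1 - t) := by
    convert one_sub_inv_le_log_of_pos (show 0 < 1 - t by linarith) using 1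
    field_simp [(show 1 - t ≠ 0 by linarith)]
    ring
  have hlinear : 0 < a * (t / (1 + t)) + b * (-t / (1 - t)) := by
    have hsum : a * (t / (1 + t)) + b * (-t / (1 - t))
        = t * (a * (1 - t) - b * (1 + t)) / ((1 + t) * (1 - t)) := by
      field_simp [(show 1 - t ≠ 0 by linarith)]
      ring
    rw [hsum]
    exact div_pos (mul_pos ht₀ (by linarith)) (mul_pos (by linarith) (by linarith))
  nlinarith [mul_le_mul_of_nonneg_left hplus ha, mul_le_mul_of_nonneg_left hminus hb]

lemma exists_mul_log_one_add_add_mul_log_one_sub_pos {a b : ℝ} (hb : 0 ≤ b) (hba : b < a)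
    (ha : a ≤ 1) : ∃ t, 0 < t ∧ t < 1 ∧ 0 < a * log (1 + t) + b * log (1 - t) := by
  refine ⟨(a - b) / 4, by linarith, by linarith,
    mul_log_one_add_add_mul_log_one_sub_pos hb (by linarith) (by linarith) ?_⟩
  nlinarith [mul_pos (sub_pos.2 hba) (show 0 < 4 - (a + b) by linarith)]

lemma integrable_indicator_const_sub_const {X : Type*} [MeasurableSpace X] (μ : Measure X)
    [IsFiniteMeasure μ] {A : Set X} (hA : MeasurableSet A) (c d : ℝ) :
    Integrable (fun x => A.indicator (fun _ => c) x - d) μ :=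
  ((integrable_const c).indicator hA).sub (integrable_const d)

lemma integral_indicator_const_sub_const {X : Type*} [MeasurableSpace X] (μ : Measure X)
    [IsProbabilityMeasure μ] {A : Set X} (hA : MeasurableSet A) (c d : ℝ) :
    ∫ x, (A.indicator (fun _ => c) x - d) ∂μ = μ.real A * c - d := by
  rw [integral_sub ((integrable_const c).indicator hA) (integrable_const d),
    integral_indicator_const c hA, integral_const, probReal_univ, smul_eq_mul, one_smul]

lemma one_sub_half_one_add_indicator {X : Type*} (A : Set X) (t : ℝ) (x : X) :
    1 - (1 + A.indicator (fun _ => t) x) / 2 = (1 + A.indicator (fun _ => -t) x) / 2 := by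
  by_cases hx : x ∈ A
  · simp only [Set.indicator_of_mem hx]
    ring
  · simp only [Set.indicator_of_notMem hx]
    norm_num

lemma log_half_one_add_indicator {X : Type*} (A : Set X) {t : ℝ} (ht : -1 < t) (x : X) :
    log ((1 + A.indicator (fun _ => t) x) / 2) = A.indicator (fun _ => log (1 + t)) x - log 2 := by
  by_cases hx : x ∈ A
  · simp only [Set.indicator_of_mem hx]
    exact log_div (by linarith) two_ne_zero
  · simp [Set.indicator_of_notMem hx]

/-- If `μ ≠ ν`, some measurable discriminator `D : X → (0,1)` achieves an adversarial
objective `∫ log D dμ + ∫ log (1 - D) dν` strictly greater than `-2 log 2` (the value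
of the constant discriminator `1/2`), with both integrals finite. -/
theorem fade_stmt10 {X : Type*} [MeasurableSpace X] (μ ν : Measure X)
    [IsProbabilityMeasure μ] [IsProbabilityMeasure ν] (hne : μ ≠ ν) :
    ∃ D : X → ℝ, Measurable D ∧ (∀ x, D x ∈ Set.Ioo (0 : ℝ) 1) ∧
      Integrable (fun x => Real.log (D x)) μ ∧
      Integrable (fun x => Real.log (1 - D x)) ν ∧
      (∫ x, Real.log (D x) ∂μ) + (∫ x, Real.log (1 - D x) ∂ν) > -2 * Real.log 2 := by
  obtain ⟨A, hA, hlt⟩ := exists_measurableSet_measureReal_lt_of_ne hne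
  obtain ⟨t, ht₀, ht₁, hgain⟩ := exists_mul_log_one_add_add_mul_log_one_sub_pos
    measureReal_nonneg hlt measureReal_le_one
  have hlogD : (fun x => log ((1 + A.indicator (fun _ => t) x) / 2))
      = fun x => A.indicator (fun _ => log (1 + t)) x - log 2 :=
    funext (log_half_one_add_indicator A (by linarith))
  have hlog1D : (fun x => log (1 - (1 + A.indicator (fun _ => t) x) / 2))
      = fun x => A.indicator (fun _ => log (1 - t)) x - log 2 := by
    simp only [one_sub_half_one_add_indicator, sub_eq_add_neg (1 : ℝ) t]
    exact funext (log_half_one_add_indicator A (by linarith))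
  refine ⟨fun x => (1 + A.indicator (fun _ => t) x) / 2,
    ((measurable_const.indicator hA).const_add 1).div_const 2, fun x => ?_, ?_, ?_, ?_⟩
  · by_cases hx : x ∈ A <;> simp only [hx, Set.indicator_of_mem, Set.indicator_of_notMem,
      not_false_eq_true, Set.mem_Ioo] <;> constructor <;> linarith
  · rw [hlogD]
    exact integrable_indicator_const_sub_const μ hA _ _
  · rw [hlog1D]
    exact integrable_indicator_const_sub_const ν hA _ _
  · rw [hlogD, hlog1D, integral_indicator_const_sub_const μ hA,
      integral_indicator_const_sub_const ν hA]
    linarith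
end

section
/- Let μ and ν be probability measures on a measurable space (X, 𝒜), let m = (1/2)•μ + (1/2)•ν, and assume KL(μ ‖ m) and KL(ν ‖ m) are finite. Then the supremum, over all measurable functions D : X → (0,1) such that log∘D is μ-integrable and log∘(1−D) is ν-integrable, of ∫ log(D(x)) dμ(x) + ∫ log(1 − D(x)) dν(x), equals KL(μ ‖ m) + KL(ν ‖ m) − 2·log 2, where KL denotes the Kullback–Leibler divergence (here real-valued by the finiteness assumption) and log the natural logarithm. -/
open MeasureTheory
open scoped ENNReal Classical

/-- The Kullback–Leibler divergence, valued in `[0, ∞]`: it is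
`∫ log (dμ/dν) dμ` when `μ ≪ ν` and the log-likelihood ratio is integrable,
and `∞` otherwise. -/
noncomputable def klDiv {X : Type*} [MeasurableSpace X] (μ ν : Measure X) : ℝ≥0∞ :=
  if μ ≪ ν ∧ Integrable (llr μ ν) μ then ENNReal.ofReal (∫ x, llr μ ν x ∂μ) else ⊤

/-! Write `f = dμ/dm` and `g = dν/dm`, so that `f + g = 2` `m`-a.e. and the objective is
`∫ (f log D + g log (1 - D)) dm`. Applying `log x ≤ x - 1` to `2D/f` and `2(1 - D)/g` bounds the
integrand by `f log (f/2) + g log (g/2)`, whose integral is `KL(μ ‖ m) + KL(ν ‖ m) - 2 log 2`.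
The pointwise maximiser `D = f/2` may take the values `0` and `1`, so the supremum is only
approached, by the discriminators `s f/2 + (1 - s)/2`, which lose at most `-2 log s`. -/

open Real Set

lemma mul_log_le_mul_log_add_sub {a c : ℝ} (ha : 0 ≤ a) (hc : 0 < c) :
    a * log c ≤ a * log a + c - a := by
  rcases ha.eq_or_lt with rfl | ha
  · simpa using hc.le
  · have h := log_le_sub_one_of_pos (div_pos hc ha)
    rw [log_div hc.ne' ha.ne'] at h
    have := mul_le_mul_of_nonneg_left h ha.le
    rw [mul_sub, mul_sub, mul_one, mul_div_cancel₀ _ ha.ne'] at this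
    linarith

lemma mul_log_add_mul_log_le {a b d : ℝ} (ha : 0 ≤ a) (hb : 0 ≤ b) (hab : a + b = 2)
    (hd : d ∈ Ioo (0 : ℝ) 1) :
    a * log d + b * log (1 - d) ≤ a * (log a - log 2) + b * (log b - log 2) := by
  obtain ⟨hd0, hd1⟩ := hd
  have hA := mul_log_le_mul_log_add_sub ha (by positivity : (0 : ℝ) < 2 * d)
  have hB := mul_log_le_mul_log_add_sub hb (by linarith : (0 : ℝ) < 2 * (1 - d))
  rw [log_mul two_ne_zero hd0.ne'] at hA
  rw [log_mul two_ne_zero (by linarith)] at hB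
  have h2 : a * log 2 + b * log 2 = 2 * log 2 := by rw [← add_mul, hab]
  nlinarith

section

variable {X : Type*} [MeasurableSpace X] {μ ν m : Measure X}

lemma klDiv_ne_top_iff : klDiv μ ν ≠ ⊤ ↔ μ ≪ ν ∧ Integrable (llr μ ν) μ := by
  unfold klDiv
  split_ifs with h <;> simp [h]

lemma toReal_klDiv_of_measure_univ_eq [IsFiniteMeasure μ] [IsFiniteMeasure ν] (hμν : μ ≪ ν)
    (h_int : Integrable (llr μ ν) μ) (h_eq : μ univ = ν univ) :
    (klDiv μ ν).toReal = ∫ x, llr μ ν x ∂μ := by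
  have h := InformationTheory.integral_llr_add_sub_measure_univ_nonneg hμν h_int
  rw [measureReal_def, measureReal_def, h_eq, add_sub_cancel_right] at h
  rw [klDiv, if_pos ⟨hμν, h_int⟩, ENNReal.toReal_ofReal h]

lemma isProbabilityMeasure_midpoint [IsProbabilityMeasure μ] [IsProbabilityMeasure ν] :
    IsProbabilityMeasure ((1 / 2 : ℝ≥0∞) • μ + (1 / 2 : ℝ≥0∞) • ν) :=
  ⟨by simp [ENNReal.inv_two_add_inv_two]⟩

lemma toReal_rnDeriv_add_toReal_rnDeriv_midpoint
    [IsProbabilityMeasure μ] [IsProbabilityMeasure ν]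
    (hm : m = (1 / 2 : ℝ≥0∞) • μ + (1 / 2 : ℝ≥0∞) • ν) :
    ∀ᵐ x ∂m, (μ.rnDeriv m x).toReal + (ν.rnDeriv m x).toReal = 2 := by
  have : IsProbabilityMeasure m := hm ▸ isProbabilityMeasure_midpoint
  have h2m : μ + ν = (2 : ℝ≥0∞) • m := by
    rw [hm, smul_add, smul_smul, smul_smul,
      ENNReal.mul_div_cancel two_ne_zero ENNReal.ofNat_ne_top, one_smul, one_smul]
  have h2 : ((2 : ℝ≥0∞) • m).rnDeriv m =ᵐ[m] fun _ => 2 := by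
    filter_upwards [Measure.rnDeriv_smul_left_of_ne_top' m m (r := 2) ENNReal.ofNat_ne_top,
      Measure.rnDeriv_self m] with x hsmul hself
    rw [hsmul, Pi.smul_apply, hself, smul_eq_mul, mul_one]
  have hadd := Measure.rnDeriv_add μ ν m
  rw [h2m] at hadd
  filter_upwards [hadd, h2] with x hadd htwo
  have hsum : μ.rnDeriv m x + ν.rnDeriv m x = 2 := by rw [← Pi.add_apply, ← hadd, htwo]
  obtain ⟨hμ, hν⟩ := ENNReal.add_ne_top.1 (hsum ▸ ENNReal.ofNat_ne_top)
  rw [← ENNReal.toReal_add hμ hν, hsum, ENNReal.toReal_ofNat]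

theorem integral_log_add_integral_log_one_sub_le
    [IsProbabilityMeasure μ] [IsProbabilityMeasure ν]
    (hm : m = (1 / 2 : ℝ≥0∞) • μ + (1 / 2 : ℝ≥0∞) • ν) (hμm : μ ≪ m) (hνm : ν ≪ m)
    (hμ_int : Integrable (llr μ m) μ) (hν_int : Integrable (llr ν m) ν)
    {D : X → ℝ} (hD : ∀ x, D x ∈ Ioo (0 : ℝ) 1) (hDμ : Integrable (fun x => log (D x)) μ)
    (hDν : Integrable (fun x => log (1 - D x)) ν) :
    ∫ x, log (D x) ∂μ + ∫ x, log (1 - D x) ∂ν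
      ≤ ∫ x, llr μ m x ∂μ + ∫ x, llr ν m x ∂ν - 2 * log 2 := by
  have : IsProbabilityMeasure m := hm ▸ isProbabilityMeasure_midpoint
  set f := fun x => (μ.rnDeriv m x).toReal
  set g := fun x => (ν.rnDeriv m x).toReal
  have hμ_int' : Integrable (fun x => log (f x) - log 2) μ := hμ_int.sub (integrable_const _)
  have hν_int' : Integrable (fun x => log (g x) - log 2) ν := hν_int.sub (integrable_const _)
  have hfD := (integrable_toReal_rnDeriv_mul_iff hμm).2 hDμ
  have hgD := (integrable_toReal_rnDeriv_mul_iff hνm).2 hDν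
  have hff := (integrable_toReal_rnDeriv_mul_iff hμm).2 hμ_int'
  have hgg := (integrable_toReal_rnDeriv_mul_iff hνm).2 hν_int'
  have hpointwise : ∀ᵐ x ∂m, f x * log (D x) + g x * log (1 - D x)
      ≤ f x * (log (f x) - log 2) + g x * (log (g x) - log 2) := by
    filter_upwards [toReal_rnDeriv_add_toReal_rnDeriv_midpoint hm] with x hx
    exact mul_log_add_mul_log_le ENNReal.toReal_nonneg ENNReal.toReal_nonneg hx (hD x)
  calc ∫ x, log (D x) ∂μ + ∫ x, log (1 - D x) ∂ν
      = ∫ x, (f x * log (D x) + g x * log (1 - D x)) ∂m := by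
        rw [integral_add hfD hgD, integral_toReal_rnDeriv_mul hμm, integral_toReal_rnDeriv_mul hνm]
    _ ≤ ∫ x, (f x * (log (f x) - log 2) + g x * (log (g x) - log 2)) ∂m :=
        integral_mono_ae (hfD.add hgD) (hff.add hgg) hpointwise
    _ = ∫ x, (llr μ m x - log 2) ∂μ + ∫ x, (llr ν m x - log 2) ∂ν := by
        rw [integral_add hff hgg, integral_toReal_rnDeriv_mul hμm, integral_toReal_rnDeriv_mul hνm]
        rfl
    _ = ∫ x, llr μ m x ∂μ + ∫ x, llr ν m x ∂ν - 2 * log 2 := by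
        rw [integral_sub hμ_int (integrable_const _), integral_sub hν_int (integrable_const _)]
        simp only [integral_const, probReal_univ, one_smul]
        ring

lemma integrable_log_and_log_add_integral_llr_le [IsProbabilityMeasure μ] [SigmaFinite m]
    (hμm : μ ≪ m) (hμ_int : Integrable (llr μ m) μ)
    {E : X → ℝ} (hE : Measurable E) (hE_le : ∀ x, E x ≤ 1)
    {c : ℝ} (hc : 0 < c) (hcE : ∀ᵐ x ∂μ, c * (μ.rnDeriv m x).toReal ≤ E x) :
    Integrable (fun x => log (E x)) μ ∧ log c + ∫ x, llr μ m x ∂μ ≤ ∫ x, log (E x) ∂μ := by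
  have hlow : ∀ᵐ x ∂μ, 0 < E x ∧ log c + llr μ m x ≤ log (E x) := by
    filter_upwards [Measure.rnDeriv_pos hμm, hμm.ae_le (Measure.rnDeriv_lt_top μ m), hcE]
      with x hpos hlt hx
    have hf : 0 < (μ.rnDeriv m x).toReal := ENNReal.toReal_pos hpos.ne' hlt.ne
    refine ⟨(mul_pos hc hf).trans_le hx, ?_⟩
    rw [llr_def, ← log_mul hc.ne' hf.ne']
    exact log_le_log (mul_pos hc hf) hx
  have hlower_int : Integrable (fun x => log c + llr μ m x) μ := (integrable_const _).add hμ_int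
  have hlog_int : Integrable (fun x => log (E x)) μ := by
    refine hlower_int.abs.mono' (measurable_log.comp hE).aestronglyMeasurable ?_
    filter_upwards [hlow] with x ⟨hpos, hx⟩
    rw [norm_of_nonpos (log_nonpos hpos.le (hE_le x))]
    exact (neg_le_neg hx).trans (neg_le_abs _)
  refine ⟨hlog_int, ?_⟩
  calc log c + ∫ x, llr μ m x ∂μ = ∫ x, (log c + llr μ m x) ∂μ := by
        rw [integral_add (integrable_const _) hμ_int, integral_const, probReal_univ, one_smul]
    _ ≤ ∫ x, log (E x) ∂μ := integral_mono_ae hlower_int hlog_int (hlow.mono fun _ h => h.2)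

/-- The discriminator `s f/2 + (1 - s)/2` of the sketch above; clamping `f/2` at `1` changes it
only on the `m`-null set where `f > 2`, and keeps it in `(0, 1)` everywhere. -/
noncomputable def mixedDiscriminator (μ m : Measure X) (s : ℝ) (x : X) : ℝ :=
  s * min ((μ.rnDeriv m x).toReal / 2) 1 + (1 - s) / 2

lemma measurable_mixedDiscriminator (s : ℝ) : Measurable (mixedDiscriminator μ m s) :=
  ((((Measure.measurable_rnDeriv μ m).ennreal_toReal.div_const 2).min
    measurable_const).const_mul s).add_const _

lemma mixedDiscriminator_mem_Ioo {s : ℝ} (hs : s ∈ Ioo (0 : ℝ) 1) (x : X) :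
    mixedDiscriminator μ m s x ∈ Ioo (0 : ℝ) 1 := by
  have h0 : 0 ≤ min ((μ.rnDeriv m x).toReal / 2) 1 := le_min (by positivity) zero_le_one
  have h1 : min ((μ.rnDeriv m x).toReal / 2) 1 ≤ 1 := min_le_right _ _
  obtain ⟨hs0, hs1⟩ := hs
  constructor <;> unfold mixedDiscriminator <;> nlinarith

theorem exists_le_integral_log_add_integral_log_one_sub
    [IsProbabilityMeasure μ] [IsProbabilityMeasure ν]
    (hm : m = (1 / 2 : ℝ≥0∞) • μ + (1 / 2 : ℝ≥0∞) • ν) (hμm : μ ≪ m) (hνm : ν ≪ m)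
    (hμ_int : Integrable (llr μ m) μ) (hν_int : Integrable (llr ν m) ν)
    {s : ℝ} (hs : s ∈ Ioo (0 : ℝ) 1) :
    ∃ D : X → ℝ, Measurable D ∧ (∀ x, D x ∈ Ioo (0 : ℝ) 1) ∧
      Integrable (fun x => log (D x)) μ ∧ Integrable (fun x => log (1 - D x)) ν ∧
      ∫ x, llr μ m x ∂μ + ∫ x, llr ν m x ∂ν - 2 * log 2 + 2 * log s
        ≤ ∫ x, log (D x) ∂μ + ∫ x, log (1 - D x) ∂ν := by
  have : IsProbabilityMeasure m := hm ▸ isProbabilityMeasure_midpoint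
  set D := mixedDiscriminator μ m s
  have hD := mixedDiscriminator_mem_Ioo (μ := μ) (m := m) hs
  have hbounds : ∀ᵐ x ∂m, s / 2 * (μ.rnDeriv m x).toReal ≤ D x ∧
      s / 2 * (ν.rnDeriv m x).toReal ≤ 1 - D x := by
    filter_upwards [toReal_rnDeriv_add_toReal_rnDeriv_midpoint hm] with x hx
    have hg : 0 ≤ (ν.rnDeriv m x).toReal := ENNReal.toReal_nonneg
    have hmin : min ((μ.rnDeriv m x).toReal / 2) 1 = (μ.rnDeriv m x).toReal / 2 :=
      min_eq_left (by linarith)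
    simp only [D, mixedDiscriminator, hmin]
    obtain ⟨hs0, hs1⟩ := hs
    constructor <;> nlinarith
  obtain ⟨hDμ, hμ_le⟩ := integrable_log_and_log_add_integral_llr_le hμm hμ_int
    (measurable_mixedDiscriminator s) (fun x => (hD x).2.le) (half_pos hs.1)
    (hμm.ae_le (hbounds.mono fun _ h => h.1))
  obtain ⟨hDν, hν_le⟩ := integrable_log_and_log_add_integral_llr_le (E := fun x => 1 - D x)
    hνm hν_int ((measurable_mixedDiscriminator s).const_sub 1) (fun x => by linarith [(hD x).1])
    (half_pos hs.1) (hνm.ae_le (hbounds.mono fun _ h => h.2))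
  refine ⟨D, measurable_mixedDiscriminator s, hD, hDμ, hDν, ?_⟩
  rw [log_div hs.1.ne' two_ne_zero] at hμ_le hν_le
  linarith

end

/-- With `m = (1/2) μ + (1/2) ν` and `KL(μ ‖ m)`, `KL(ν ‖ m)` finite, the supremum over
measurable discriminators `D : X → (0,1)` (with integrable log-scores) of the adversarial
objective `∫ log D dμ + ∫ log (1 - D) dν` equals `KL(μ ‖ m) + KL(ν ‖ m) - 2 log 2`. -/
theorem fade_stmt13 {X : Type*} [MeasurableSpace X] (μ ν : Measure X)
    [IsProbabilityMeasure μ] [IsProbabilityMeasure ν]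
    (m : Measure X) (hm : m = (1 / 2 : ℝ≥0∞) • μ + (1 / 2 : ℝ≥0∞) • ν)
    (hμm : klDiv μ m ≠ ⊤) (hνm : klDiv ν m ≠ ⊤) :
    sSup {r : ℝ | ∃ D : X → ℝ, Measurable D ∧ (∀ x, D x ∈ Set.Ioo (0 : ℝ) 1) ∧
        Integrable (fun x => Real.log (D x)) μ ∧
        Integrable (fun x => Real.log (1 - D x)) ν ∧
        r = (∫ x, Real.log (D x) ∂μ) + (∫ x, Real.log (1 - D x) ∂ν)}
      = (klDiv μ m).toReal + (klDiv ν m).toReal - 2 * Real.log 2 := by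
  have : IsProbabilityMeasure m := hm ▸ isProbabilityMeasure_midpoint
  obtain ⟨hμ_ac, hμ_int⟩ := klDiv_ne_top_iff.1 hμm
  obtain ⟨hν_ac, hν_int⟩ := klDiv_ne_top_iff.1 hνm
  rw [toReal_klDiv_of_measure_univ_eq hμ_ac hμ_int (by simp),
    toReal_klDiv_of_measure_univ_eq hν_ac hν_int (by simp)]
  refine csSup_eq_of_forall_le_of_forall_lt_exists_gt ?_ ?_ ?_
  · obtain ⟨D, hD, hD_mem, hDμ, hDν, -⟩ :=
      exists_le_integral_log_add_integral_log_one_sub hm hμ_ac hν_ac hμ_int hν_int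
        (s := 1 / 2) (by norm_num)
    exact ⟨_, D, hD, hD_mem, hDμ, hDν, rfl⟩
  · rintro _ ⟨D, -, hD_mem, hDμ, hDν, rfl⟩
    exact integral_log_add_integral_log_one_sub_le hm hμ_ac hν_ac hμ_int hν_int hD_mem hDμ hDν
  · intro w hw
    set B := ∫ x, llr μ m x ∂μ + ∫ x, llr ν m x ∂ν - 2 * log 2
    have hs : exp ((w - B) / 4) ∈ Ioo (0 : ℝ) 1 := ⟨exp_pos _, exp_lt_one_iff.2 (by linarith)⟩
    obtain ⟨D, hD, hD_mem, hDμ, hDν, hle⟩ :=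
      exists_le_integral_log_add_integral_log_one_sub hm hμ_ac hν_ac hμ_int hν_int hs
    refine ⟨_, ⟨D, hD, hD_mem, hDμ, hDν, rfl⟩, ?_⟩
    rw [log_exp] at hle
    linarith
end
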